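/- arXiv:0910.0916 — 7 statements merged into one kernel-verified Lean document; each statement's English description precedes it below -/
import Mathlib

section
/- Let G = (W, E) be an undirected graph on workers labeled w_1,...,w_n, and let D = (W, E') be the DAG with (w_i, w_j) ∈ E' iff i < j and {w_i, w_j} ∈ E. Let there be n firms f_1,...,f_n each with one position, all workers preferring f_i to f_j iff i < j, and all firms preferring w_i to w_j iff i < j. Then a complete (perfect) matching μ between workers and firms is a locally stable matching with respect to G if and only if the ordering φ_μ, defined by φ_μ(w) = i whenever μ(w) = f_i, is a topological ordering of D. -/
/-! Indexing blocking pairs `(w, f)` by the worker `j = μ⁻¹ f` employed at `f`, local stability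
says that `μ` inverts no edge `i < j` of `G`. Since `μ` is injective, not inverting an edge is the
same as being strictly increasing along it. -/

theorem Function.Injective.lt_iff_not_lt {α β : Type*} [LinearOrder β] {f : α → β}
    (hf : Function.Injective f) {i j : α} (hij : i ≠ j) : f i < f j ↔ ¬ f j < f i :=
  (not_lt.trans (hf.ne hij).le_iff_lt).symm

theorem Function.Injective.forall_not_lt_iff_forall_lt {α β : Type*} [Preorder α]
    [LinearOrder β] {f : α → β} (hf : Function.Injective f) (r : α → α → Prop) :
    (∀ i j, f j < f i → i < j → ¬ r i j) ↔ ∀ i j, i < j → r i j → f i < f j := by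
  refine forall₂_congr fun i j => ⟨fun h hij hr => ?_, fun h hji hij hr => ?_⟩
  · exact (hf.lt_iff_not_lt hij.ne).2 fun hji => h hji hij hr
  · exact (hf.lt_iff_not_lt hij.ne).1 (h hij hr) hji

/-- Characterization of locally stable matchings for `k = 1` under aligned
preferences: workers and firms are indexed by `Fin n`, worker `i` is preferred
by all firms to worker `j` iff `i < j`, and firm `i` is preferred by all workers
to firm `j` iff `i < j`. A complete matching `μ` (a bijection, `μ w` being the
firm of worker `w`) is locally stable w.r.t. the social network `G` iff the
induced ordering is a topological ordering of the DAG `D` on workers with an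
arc `i → j` whenever `i < j` and `G.Adj i j`. -/
theorem locally_stable_iff_topological_ordering
    (n : ℕ) (G : SimpleGraph (Fin n)) (μ : Equiv.Perm (Fin n)) :
    -- locally stable: every blocking pair (w, f) (i.e. f ≻_w μ(w) and w ≻_f μ⁻¹(f))
    -- has no neighbor of w employed at f
    (∀ w f : Fin n, f < μ w → w < μ.symm f → ¬ G.Adj w (μ.symm f)) ↔
    -- topological ordering of D
    (∀ i j : Fin n, i < j → G.Adj i j → μ i < μ j) := by
  calc (∀ w f : Fin n, f < μ w → w < μ.symm f → ¬ G.Adj w (μ.symm f))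
      ↔ ∀ i j : Fin n, μ j < μ i → i < j → ¬ G.Adj i j :=
        forall_congr' fun w => by
          rw [← μ.forall_congr_right]
          simp only [Equiv.symm_apply_apply]
    _ ↔ ∀ i j : Fin n, i < j → G.Adj i j → μ i < μ j :=
        μ.injective.forall_not_lt_iff_forall_lt G.Adj
end

section
/- If G is the star graph on workers w_1,...,w_n centered at w_1, with all firms ranking workers w_1 ≻ w_2 ≻ ... ≻ w_n and all workers ranking firms f_1 ≻ f_2 ≻ ... ≻ f_n, and each firm has one position (k = 1), then there are exactly (n-1)! distinct complete locally stable matchings. -/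
/-!
The centre `c` is every firm's favourite worker and the top firm is every worker's favourite.
If `c` is not employed at the top firm, then `c` and the top firm form a blocking pair, and the
worker employed there is a neighbour of `c`. Conversely, once `c` holds the top firm, `c` blocks
with no firm and no worker blocks with the top firm, while every edge of the star contains `c`;
so all the other workers may be matched arbitrarily, giving `(n - 1)!` matchings.
-/

open Equiv

variable {α : Type*}

/-- Workers and firms are both indexed by the linear order `α`, `μ w` is the firm of worker `w`,
and smaller means preferred, on both sides of the market. -/
def IsLocallyStable [LinearOrder α] (G : SimpleGraph α) (μ : Perm α) : Prop :=
  ∀ w f, f < μ w → w < μ.symm f → ¬ G.Adj w (μ.symm f)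

def starGraph (c : α) : SimpleGraph α :=
  SimpleGraph.fromRel fun w _ => w = c

theorem isLocallyStable_starGraph_iff [LinearOrder α] {c : α} (hc : IsBot c) (μ : Perm α) :
    IsLocallyStable (starGraph c) μ ↔ μ c = c := by
  simp only [IsLocallyStable, starGraph, SimpleGraph.fromRel_adj]
  constructor
  · intro hstable
    by_contra hμc
    have hfirm : c < μ c := lt_of_le_of_ne (hc _) (Ne.symm hμc)
    have hworker : c < μ.symm c :=
      lt_of_le_of_ne (hc _) fun h => hμc (μ.symm_apply_eq.mp h.symm).symm
    exact hstable c c hfirm hworker ⟨hworker.ne, Or.inl rfl⟩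
  · rintro hμc w f hf hw ⟨-, rfl | hcenter⟩
    · exact (hc f).not_gt (hμc ▸ hf)
    · obtain rfl : f = c := by rw [← μ.apply_symm_apply f, hcenter, hμc]
      exact (hc w).not_gt (hcenter ▸ hw)

theorem card_perm_apply_eq_self [Fintype α] [DecidableEq α] (c : α) :
    Nat.card {μ : Perm α // μ c = c} = (Fintype.card α - 1).factorial := by
  have e : {μ : Perm α // μ c = c} ≃ Perm {a // a ≠ c} :=
    (subtypeEquivRight fun μ => by simp).trans (Perm.subtypeEquivSubtypePerm (· ≠ c)).symm
  rw [Nat.card_congr e, Nat.card_eq_fintype_card, Fintype.card_perm,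
    Fintype.card_subtype_compl, Fintype.card_subtype_eq]

/-- For the star graph centered at worker `0` (= w_1), with aligned preferences
(all firms rank workers by index, all workers rank firms by index) and one
position per firm, there are exactly `(n-1)!` complete locally stable matchings.
Adjacency in the star: `w ≠ v ∧ (w = 0 ∨ v = 0)`. -/
theorem card_locally_stable_matchings_star
    (n : ℕ) (hn : 0 < n) :
    Nat.card {μ : Equiv.Perm (Fin n) //
        ∀ w f : Fin n, f < μ w → w < μ.symm f →
          ¬ (w ≠ μ.symm f ∧ (w = ⟨0, hn⟩ ∨ μ.symm f = ⟨0, hn⟩))} =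
      Nat.factorial (n - 1) := by
  have hbot : IsBot (⟨0, hn⟩ : Fin n) := fun _ => Nat.zero_le _
  -- The predicate above is `IsLocallyStable (starGraph ⟨0, hn⟩) μ` unfolded.
  calc _ = Nat.card {μ : Perm (Fin n) // μ ⟨0, hn⟩ = ⟨0, hn⟩} :=
        Nat.card_congr (subtypeEquivRight (isLocallyStable_starGraph_iff hbot))
    _ = (n - 1).factorial := by rw [card_perm_apply_eq_self, Fintype.card_fin]
end

section
/- There exist instances where the set of locally stable matchings does not form a lattice under the worker-optimal join: with n = 3 workers and firms, aligned preferences (all workers rank f_1 ≻ f_2 ≻ f_3, all firms rank w_1 ≻ w_2 ≻ w_3), and G the path w_2 - w_1 - w_3, the matchings μ (μ(w_i) = f_i for all i) and μ' (μ'(w_1) = f_1, μ'(w_2) = f_3, μ'(w_3) = f_2) are both locally stable, but the function λ defined by λ(w) = the better (for w) of μ(w), μ'(w) is not a matching, since λ(w_2) = f_2 and λ(w_3) = f_2. -/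
/-- Absence of the distributive lattice: with 3 workers and 3 firms, aligned
preferences (index order on both sides), and `G` the path `w_2 - w_1 - w_3`
(worker `0` adjacent to workers `1` and `2`), the identity matching `μ` and the
matching `μ'` swapping firms of `w_2` and `w_3` are both locally stable, but the
worker-optimal join `λ`, assigning each worker the better (smaller-index) of her
two firms, is not a matching (it is not injective). -/
theorem locally_stable_not_lattice :
    let G : SimpleGraph (Fin 3) := SimpleGraph.fromRel (fun i _ => i = 0)
    let μ : Equiv.Perm (Fin 3) := 1
    let μ' : Equiv.Perm (Fin 3) := Equiv.swap 1 2
    (∀ w f : Fin 3, f < μ w → w < μ.symm f → ¬ G.Adj w (μ.symm f)) ∧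
    (∀ w f : Fin 3, f < μ' w → w < μ'.symm f → ¬ G.Adj w (μ'.symm f)) ∧
    ¬ Function.Injective (fun w => min (μ w) (μ' w)) := by
  intro G μ μ'
  refine ⟨?_, ?_, ?_⟩
  · intro w f h1 h2
    simp only [G, SimpleGraph.fromRel_adj]
    revert h1 h2; revert w f; decide
  · intro w f h1 h2
    simp only [G, SimpleGraph.fromRel_adj]
    revert h1 h2; revert w f; decide
  intro h
  have := h (a₁ := 1) (a₂ := 2) (by decide)
  exact absurd this (by decide)
end

section
/- Let G = (W, E) be a graph and I ⊆ W an independent set. Consider the many-to-one job market with firms each having k positions, where all firms share a common ranking of workers that places the |I| members of I as the top |I| workers (in any order), and all workers share a common ranking of firms. Then in any run of the local Gale–Shapley dynamics from any initial complete matching, no worker w ∈ I ever loses her job; consequently at most n_f − ⌈|I|/k⌉ firms can end with zero employees, where n_f is the number of firms. -/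
/-!
A worker `w ∈ I` could only be fired by a worker `a` ranked above her, so `a ∈ I`. Since `I` is
independent, `a` reaches the firm through a neighbour `y` already employed there, and `y` is
ranked above the least-preferred employee `w`, so `y ∈ I` as well: an edge inside `I`, which is
impossible. Hence the `|I|` top workers stay employed, and since no firm ever exceeds its `k`
positions they occupy at least `⌈|I|/k⌉` firms.
-/

/-- The set of workers employed by firm `f` under assignment `μ`
(`μ w = some f` means worker `w` works at firm `f`; `none` means unemployed). -/
def employs {n nf : ℕ} (μ : Fin n → Option (Fin nf)) (f : Fin nf) : Finset (Fin n) :=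
  Finset.univ.filter (fun w => μ w = some f)

/-- One step of the local Gale–Shapley dynamics: an active worker `a` moves to a
firm `f` employing one of her neighbors in `G`, provided she prefers `f`
(smaller index) to her current situation and `f` either has an empty position or
prefers `a` to its least-preferred (largest-index) current employee `z`, who is
then fired. -/
def LocalGSStep {n nf : ℕ} (k : ℕ) (G : SimpleGraph (Fin n))
    (μ μ' : Fin n → Option (Fin nf)) : Prop :=
  ∃ a f, (∃ y, G.Adj a y ∧ μ y = some f) ∧ (∀ g, μ a = some g → f < g) ∧
    (((employs μ f).card < k ∧ μ' = Function.update μ a (some f)) ∨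
     (∃ z, μ z = some f ∧ (∀ y ∈ employs μ f, y ≤ z) ∧ a < z ∧
        μ' = Function.update (Function.update μ z none) a (some f)))

section LocalGaleShapley

variable {n nf : ℕ}

@[simp]
theorem mem_employs {μ : Fin n → Option (Fin nf)} {f : Fin nf} {w : Fin n} :
    w ∈ employs μ f ↔ μ w = some f := by
  simp [employs]

theorem employs_update (μ : Fin n → Option (Fin nf)) (a : Fin n) (o : Option (Fin nf))
    (f : Fin nf) :
    employs (Function.update μ a o) f =
      if o = some f then insert a (employs μ f) else (employs μ f).erase a := by
  ext w
  by_cases hwa : w = a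
  · subst hwa
    split_ifs <;> simp_all
  · split_ifs <;> simp [hwa]

theorem card_employs_update_some_le (μ : Fin n → Option (Fin nf)) (a : Fin n) (g f : Fin nf) :
    (employs (Function.update μ a (some g)) f).card ≤ (employs μ f).card + 1 := by
  rw [employs_update]
  split_ifs
  · exact Finset.card_insert_le _ _
  · exact (Finset.card_erase_le).trans (Nat.le_succ _)

theorem LocalGSStep.card_employs_le {k : ℕ} {G : SimpleGraph (Fin n)}
    {μ μ' : Fin n → Option (Fin nf)} (h : LocalGSStep k G μ μ')
    (hcap : ∀ f, (employs μ f).card ≤ k) (f : Fin nf) : (employs μ' f).card ≤ k := by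
  obtain ⟨a, g, -, -, ⟨hfree, rfl⟩ | ⟨z, hzg, -, -, rfl⟩⟩ := h
  · by_cases hfg : f = g
    · subst hfg
      exact (card_employs_update_some_le μ a f f).trans hfree
    · rw [employs_update, if_neg (by simpa [eq_comm] using hfg)]
      exact Finset.card_erase_le.trans (hcap f)
  · have hfire : employs (Function.update μ z none) f = (employs μ f).erase z := by
      simp [employs_update]
    by_cases hfg : f = g
    · subst hfg
      have hz : z ∈ employs μ f := mem_employs.mpr hzg
      have hpos : 0 < (employs μ f).card := Finset.card_pos.mpr ⟨z, hz⟩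
      calc (employs (Function.update (Function.update μ z none) a (some f)) f).card
          ≤ ((employs μ f).erase z).card + 1 := by
            rw [← hfire]; exact card_employs_update_some_le _ a f f
        _ = (employs μ f).card := by rw [Finset.card_erase_of_mem hz]; omega
        _ ≤ k := hcap f
    · rw [employs_update, if_neg (by simpa [eq_comm] using hfg), hfire]
      exact Finset.card_erase_le.trans (Finset.card_erase_le.trans (hcap f))

theorem LocalGSStep.exists_adj_le_of_fired {k : ℕ} {G : SimpleGraph (Fin n)}
    {μ μ' : Fin n → Option (Fin nf)} (h : LocalGSStep k G μ μ') {w : Fin n}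
    (hw : (μ w).isSome) (hw' : μ' w = none) : ∃ a y, G.Adj a y ∧ a ≤ w ∧ y ≤ w := by
  obtain ⟨a, g, ⟨y, hay, hyg⟩, -, ⟨-, rfl⟩ | ⟨z, -, hzlast, haz, rfl⟩⟩ := h
  · by_cases hwa : w = a
    · simp [hwa] at hw'
    · rw [Function.update_of_ne hwa] at hw'
      simp [hw'] at hw
  · by_cases hwa : w = a
    · simp [hwa] at hw'
    · by_cases hwz : w = z
      · subst hwz
        exact ⟨a, y, hay, haz.le, hzlast y (mem_employs.mpr hyg)⟩
      · rw [Function.update_of_ne hwa, Function.update_of_ne hwz] at hw'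
        simp [hw'] at hw

theorem LocalGSStep.isSome_of_mem_independent_top {k : ℕ} {G : SimpleGraph (Fin n)}
    {μ μ' : Fin n → Option (Fin nf)} (h : LocalGSStep k G μ μ') {I : Finset (Fin n)}
    (hInd : ∀ u ∈ I, ∀ v ∈ I, ¬ G.Adj u v) (hTop : ∀ w ∈ I, ∀ w' : Fin n, w' ≤ w → w' ∈ I)
    {w : Fin n} (hwI : w ∈ I) (hw : (μ w).isSome) : (μ' w).isSome := by
  rw [Option.isSome_iff_ne_none]
  intro hw'
  obtain ⟨a, y, hay, haw, hyw⟩ := h.exists_adj_le_of_fired hw hw'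
  exact hInd a (hTop w hwI a haw) y (hTop w hwI y hyw) hay

theorem LocalGSStep.run_invariant {k : ℕ} {G : SimpleGraph (Fin n)}
    {P : (Fin n → Option (Fin nf)) → Prop} {μ : ℕ → Fin n → Option (Fin nf)}
    (hrun : ∀ t, μ (t + 1) = μ t ∨ LocalGSStep k G (μ t) (μ (t + 1)))
    (h₀ : P (μ 0)) (hstep : ∀ ν ν', P ν → LocalGSStep k G ν ν' → P ν') (t : ℕ) : P (μ t) := by
  induction t with
  | zero => exact h₀
  | succ t ih =>
    rcases hrun t with hstay | hmove
    · rwa [hstay]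
    · exact hstep _ _ ih hmove

theorem card_filter_employs_eq_empty_le {k : ℕ} (hk : 0 < k) {μ : Fin n → Option (Fin nf)}
    (hcap : ∀ f, (employs μ f).card ≤ k) {I : Finset (Fin n)} (hI : ∀ w ∈ I, (μ w).isSome) :
    (Finset.univ.filter (fun f => employs μ f = ∅)).card ≤ nf - (I.card + k - 1) / k := by
  set busy := Finset.univ.filter (fun f => (employs μ f).Nonempty)
  have hIbusy : I ⊆ busy.biUnion (employs μ) := by
    intro w hw
    obtain ⟨f, hf⟩ := Option.isSome_iff_exists.mp (hI w hw)
    exact Finset.mem_biUnion.mpr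
      ⟨f, Finset.mem_filter.mpr ⟨Finset.mem_univ f, w, mem_employs.mpr hf⟩, mem_employs.mpr hf⟩
  have hcard : I.card ≤ busy.card * k :=
    calc I.card ≤ (busy.biUnion (employs μ)).card := Finset.card_le_card hIbusy
      _ ≤ ∑ f ∈ busy, (employs μ f).card := Finset.card_biUnion_le
      _ ≤ busy.card * k := Finset.sum_le_card_nsmul _ _ _ (fun f _ => hcap f)
  have hceil : (I.card + k - 1) / k ≤ busy.card := by
    rw [Nat.div_le_iff_le_mul_add_pred hk, mul_comm]
    omega
  have hidle : Finset.univ.filter (fun f => employs μ f = ∅) = busyᶜ := by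
    ext f
    simp [busy, Finset.nonempty_iff_ne_empty]
  rw [hidle, Finset.card_compl, Fintype.card_fin]
  omega

end LocalGaleShapley

theorem independent_top_workers_never_fired_general
    (n nf k : ℕ) (hk : 0 < k)
    (G : SimpleGraph (Fin n)) (I : Finset (Fin n))
    (hInd : ∀ u ∈ I, ∀ v ∈ I, ¬ G.Adj u v)
    (hTop : ∀ w ∈ I, ∀ w' : Fin n, w' ≤ w → w' ∈ I)
    (μ : ℕ → Fin n → Option (Fin nf))
    (hinit : ∀ w, (μ 0 w).isSome)
    (hinitFull : ∀ f, (employs (μ 0) f).card = k)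
    (hrun : ∀ t, μ (t + 1) = μ t ∨ LocalGSStep k G (μ t) (μ (t + 1))) :
    ∀ T : ℕ, (∀ w ∈ I, (μ T w).isSome) ∧
      (Finset.univ.filter (fun f => employs (μ T) f = ∅)).card ≤
        nf - (I.card + k - 1) / k := by
  intro T
  have hcap : ∀ f, (employs (μ T) f).card ≤ k :=
    LocalGSStep.run_invariant hrun (fun f => (hinitFull f).le)
      (fun _ _ hν hstep => hstep.card_employs_le hν) T
  have hI : ∀ w ∈ I, (μ T w).isSome :=
    LocalGSStep.run_invariant (P := fun ν => ∀ w ∈ I, (ν w).isSome) hrun (fun w _ => hinit w)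
      (fun _ _ hν hstep w hw => hstep.isSome_of_mem_independent_top hInd hTop hw (hν w hw)) T
  exact ⟨hI, card_filter_employs_eq_empty_le hk hcap hI⟩

/-- If `I` is an independent set of `G` whose members are the top-ranked workers
(the common firm ranking is by index, and `I` is downward closed under it), then
along any run of the local Gale–Shapley dynamics from a complete initial
matching, no worker of `I` ever loses her job; consequently at every time at
most `n_f - ⌈|I|/k⌉` firms have zero employees. -/
theorem independent_top_workers_never_fired
    (n nf k : ℕ) (hk : 0 < k) (hn : n = k * nf)
    (G : SimpleGraph (Fin n)) (I : Finset (Fin n))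
    (hInd : ∀ u ∈ I, ∀ v ∈ I, ¬ G.Adj u v)
    (hTop : ∀ w ∈ I, ∀ w' : Fin n, w' ≤ w → w' ∈ I)
    (μ : ℕ → Fin n → Option (Fin nf))
    (hinit : ∀ w, (μ 0 w).isSome)
    (hinitFull : ∀ f, (employs (μ 0) f).card = k)
    (hrun : ∀ t, μ (t + 1) = μ t ∨ LocalGSStep k G (μ t) (μ (t + 1))) :
    ∀ T : ℕ, (∀ w ∈ I, (μ T w).isSome) ∧
      (Finset.univ.filter (fun f => employs (μ T) f = ∅)).card ≤
        nf - (I.card + k - 1) / k :=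
  independent_top_workers_never_fired_general n nf k hk G I hInd hTop μ hinit hinitFull hrun
end

section
/- Let G = (V, E) be a graph and define G' = (V ∪ V', E') where V' = {v' : v ∈ V} is a disjoint copy of V and E' contains, for each edge {u, v} ∈ E, the four edges {u, v}, {u, v'}, {u', v}, {u', v'}, and additionally for each v ∈ V the edge {v, v'}. Then the maximum size of an independent matching in G' equals the maximum size of an independent set in G. -/
/-!
`G'` is the blow-up of `G` in which every vertex `v` becomes the clique `{v, v'}`. Two vertices
covered by an independent matching that are equal or adjacent lie in the same matching edge, so
distinct edges of an independent matching of `G'` lie over distinct, non-adjacent vertices of `G`.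
Conversely, an independent set `S` of `G` gives the independent matching `{{v, v'} : v ∈ S}`.
-/

/-- `M` is a matching of the graph `H`: a set of edges of `H` that are pairwise
vertex-disjoint. -/
def IsMatchingSet {V : Type*} (H : SimpleGraph V) (M : Finset (Sym2 V)) : Prop :=
  (∀ e ∈ M, e ∈ H.edgeSet) ∧
  (∀ e ∈ M, ∀ e' ∈ M, e ≠ e' → ∀ x : V, x ∈ e → x ∉ e')

/-- `u` is covered by the edge set `M`. -/
def CoveredBy {V : Type*} (M : Finset (Sym2 V)) (u : V) : Prop := ∃ e ∈ M, u ∈ e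

/-- An independent matching: a matching such that any two covered vertices are
adjacent iff they form an edge of the matching. -/
def IsIndepMatching {V : Type*} (H : SimpleGraph V) (M : Finset (Sym2 V)) : Prop :=
  IsMatchingSet H M ∧
  ∀ u v : V, CoveredBy M u → CoveredBy M v → H.Adj u v → s(u, v) ∈ M

section IndepMatching

variable {W : Type*} {H : SimpleGraph W} {M : Finset (Sym2 W)}

theorem IsMatchingSet.eq_of_mem_of_mem (hM : IsMatchingSet H M) {e e' : Sym2 W} (he : e ∈ M)
    (he' : e' ∈ M) {a : W} (hae : a ∈ e) (hae' : a ∈ e') : e = e' :=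
  by_contra fun hne => hM.2 e he e' he' hne a hae hae'

theorem IsIndepMatching.eq_of_mem_of_adj (hM : IsIndepMatching H M) {e e' : Sym2 W} (he : e ∈ M)
    (he' : e' ∈ M) {a b : W} (hae : a ∈ e) (hbe' : b ∈ e') (hab : H.Adj a b) : e = e' := by
  have hmem : s(a, b) ∈ M := hM.2 a b ⟨e, he, hae⟩ ⟨e', he', hbe'⟩ hab
  calc e = s(a, b) := hM.1.eq_of_mem_of_mem he hmem hae (Sym2.mem_mk_left a b)
    _ = e' := hM.1.eq_of_mem_of_mem hmem he' (Sym2.mem_mk_right a b) hbe'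

end IndepMatching

namespace SimpleGraph

variable {V W : Type*}

def blowup (G : SimpleGraph V) (p : W → V) : SimpleGraph W :=
  SimpleGraph.fromRel fun a b => G.Adj (p a) (p b) ∨ p a = p b

variable {G : SimpleGraph V} {p : W → V}

theorem blowup_adj {a b : W} :
    (G.blowup p).Adj a b ↔ a ≠ b ∧ (G.Adj (p a) (p b) ∨ p a = p b) := by
  simp only [blowup, fromRel_adj, G.adj_comm (p b), eq_comm (a := p b), or_self]

theorem exists_indep_card_eq_of_isIndepMatching_blowup {M : Finset (Sym2 W)}
    (hM : IsIndepMatching (G.blowup p) M) :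
    ∃ S : Finset V, (∀ u ∈ S, ∀ v ∈ S, ¬ G.Adj u v) ∧ S.card = M.card := by
  classical
  have eq_of_rel : ∀ e ∈ M, ∀ e' ∈ M, ∀ a ∈ e, ∀ b ∈ e',
      G.Adj (p a) (p b) ∨ p a = p b → e = e' := by
    intro e he e' he' a hae b hbe' hrel
    by_cases hab : a = b
    · exact hM.1.eq_of_mem_of_mem he he' hae (hab ▸ hbe')
    · exact hM.eq_of_mem_of_adj he he' hae hbe' (blowup_adj.2 ⟨hab, hrel⟩)
  refine ⟨M.image fun e => p e.out.1, ?_, Finset.card_image_of_injOn ?_⟩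
  · simp only [Finset.mem_image]
    rintro _ ⟨e, he, rfl⟩ _ ⟨e', he', rfl⟩ hadj
    obtain rfl := eq_of_rel e he e' he' _ e.out_fst_mem _ e'.out_fst_mem (.inl hadj)
    exact hadj.ne rfl
  · intro e he e' he' hp
    exact eq_of_rel e he e' he' _ e.out_fst_mem _ e'.out_fst_mem (.inr hp)

theorem isIndepMatching_blowup_image_of_indep [DecidableEq W] {σ τ : V → W}
    (hσ : ∀ v, p (σ v) = v) (hτ : ∀ v, p (τ v) = v) (hστ : ∀ v, σ v ≠ τ v) {S : Finset V}
    (hS : ∀ u ∈ S, ∀ v ∈ S, ¬ G.Adj u v) :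
    IsIndepMatching (G.blowup p) (S.image fun v => s(σ v, τ v)) := by
  have base_of_mem : ∀ {v a}, a ∈ s(σ v, τ v) → p a = v := by
    intro v a ha
    rcases Sym2.mem_iff.1 ha with rfl | rfl
    exacts [hσ v, hτ v]
  simp only [IsIndepMatching, IsMatchingSet, CoveredBy, Finset.mem_image, forall_exists_index,
    and_imp, forall_apply_eq_imp_iff₂]
  refine ⟨⟨fun v _ => blowup_adj.2 ⟨hστ v, .inr (by rw [hσ, hτ])⟩, ?_⟩, ?_⟩
  · intro u _ v _ hne x hxu hxv
    exact hne (by rw [← base_of_mem hxu, base_of_mem hxv])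
  · intro a b u huS hau v hvS hbv hab
    obtain ⟨hne, hrel⟩ := blowup_adj.1 hab
    rw [base_of_mem hau, base_of_mem hbv] at hrel
    obtain rfl : u = v := hrel.resolve_left (hS u huS v hvS)
    refine ⟨u, huS, ?_⟩
    rcases Sym2.mem_iff.1 hau with rfl | rfl <;> rcases Sym2.mem_iff.1 hbv with rfl | rfl
    all_goals first | exact absurd rfl hne | rfl | exact Sym2.eq_swap

end SimpleGraph

theorem max_indep_matching_doubled_eq_max_indep_set_general
    {V : Type*} (G : SimpleGraph V) :
    let p : V ⊕ V → V := Sum.elim id id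
    let G' : SimpleGraph (V ⊕ V) :=
      SimpleGraph.fromRel (fun a b => G.Adj (p a) (p b) ∨ p a = p b)
    sSup {s : ℕ | ∃ M : Finset (Sym2 (V ⊕ V)), IsIndepMatching G' M ∧ M.card = s} =
      sSup {s : ℕ | ∃ S : Finset V, (∀ u ∈ S, ∀ v ∈ S, ¬ G.Adj u v) ∧ S.card = s} := by
  intro p G'
  congr 1
  ext s
  constructor
  · rintro ⟨M, hM, rfl⟩
    exact SimpleGraph.exists_indep_card_eq_of_isIndepMatching_blowup (p := p) hM
  · rintro ⟨S, hS, rfl⟩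
    classical
    refine ⟨_, SimpleGraph.isIndepMatching_blowup_image_of_indep (σ := Sum.inl) (τ := Sum.inr)
      (fun _ => rfl) (fun _ => rfl) (fun _ => Sum.inl_ne_inr) hS, ?_⟩
    exact Finset.card_image_of_injective _ fun u v h => by simpa using h

/-- For the graph `G'` on two disjoint copies of `V`, with the four copies
`{u,v}, {u,v'}, {u',v}, {u',v'}` of each edge `{u,v}` of `G` together with the
edges `{v, v'}`, the maximum size of an independent matching of `G'` equals the
maximum size of an independent set of `G`. -/
theorem max_indep_matching_doubled_eq_max_indep_set
    {V : Type*} [Fintype V] [DecidableEq V] (G : SimpleGraph V) :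
    let p : V ⊕ V → V := Sum.elim id id
    let G' : SimpleGraph (V ⊕ V) :=
      SimpleGraph.fromRel (fun a b => G.Adj (p a) (p b) ∨ p a = p b)
    sSup {s : ℕ | ∃ M : Finset (Sym2 (V ⊕ V)), IsIndepMatching G' M ∧ M.card = s} =
      sSup {s : ℕ | ∃ S : Finset V, (∀ u ∈ S, ∀ v ∈ S, ¬ G.Adj u v) ∧ S.card = s} :=
  max_indep_matching_doubled_eq_max_indep_set_general G
end

section
/- In the marriage model on G = (M ∪ W, E) with (m_0, w_0) ∉ E, if all men share the common ranking w_{n-1} ≻ ... ≻ w_1 ≻ w_0 and all women share m_{n-1} ≻ ... ≻ m_1 ≻ m_0, then the matching μ' that pairs m_i with w_i for all i ≥ 1 and leaves m_0 and w_0 unmatched is locally stable with respect to G but not globally stable. -/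
/-!
Under the common rankings a matched man `m_i` only blocks with some `w_j`, `j > i`, and a matched
woman `w_j` only with some `m_i`, `i > j`; a blocking pair `(m_i, w_j)` with `i ≠ 0` or `j ≠ 0`
would thus need `i < j < i`. So the unmatched `(m_0, w_0)` is the only blocking pair. It is
invisible: `m_0` and `w_0` are not adjacent, and both are fixed points of the injective matching,
so no neighbour of one of them is matched to the other.
-/

open Function Sum

namespace SimpleGraph

variable {V : Type*} (G : SimpleGraph V)

theorem not_exists_adj_apply_eq_of_isFixedPt {μ : V → V} (hμ : Injective μ) {a b : V}
    (hb : IsFixedPt μ b) (hab : ¬ G.Adj a b) : ¬ ∃ x, G.Adj a x ∧ μ x = b := by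
  rintro ⟨x, hx, hxb⟩
  exact hab (hμ (hxb.trans hb.symm) ▸ hx)

end SimpleGraph

/-- `m_i` is `inl i` and `w_i` is `inr i`; an unmatched agent is a fixed point. -/
def diagMatchingExceptZero {n : ℕ} : Fin n ⊕ Fin n → Fin n ⊕ Fin n :=
  Sum.elim (fun i => if i.1 = 0 then inl i else inr i) (fun i => if i.1 = 0 then inr i else inl i)

namespace diagMatchingExceptZero

variable {n : ℕ}

theorem involutive : Involutive (diagMatchingExceptZero (n := n)) := by
  rintro (i | i) <;> by_cases hi : i.1 = 0 <;> simp [diagMatchingExceptZero, hi]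

theorem isFixedPt_inl_zero (hn : 0 < n) :
    IsFixedPt diagMatchingExceptZero (inl (⟨0, hn⟩ : Fin n)) := by
  simp [IsFixedPt, diagMatchingExceptZero]

theorem isFixedPt_inr_zero (hn : 0 < n) :
    IsFixedPt diagMatchingExceptZero (inr (⟨0, hn⟩ : Fin n)) := by
  simp [IsFixedPt, diagMatchingExceptZero]

theorem eq_zero_of_blocking {m w : Fin n}
    (hm : ∀ w', diagMatchingExceptZero (inl m) = inr w' → w' < w)
    (hw : ∀ m', diagMatchingExceptZero (inr w) = inl m' → m' < m) :
    m.1 = 0 ∧ w.1 = 0 := by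
  have hmw : m.1 ≠ 0 → m.1 < w.1 := fun h => hm m (by simp [diagMatchingExceptZero, h])
  have hwm : w.1 ≠ 0 → w.1 < m.1 := fun h => hw w (by simp [diagMatchingExceptZero, h])
  omega

end diagMatchingExceptZero

/-- In the marriage model on `G = (M ∪ W, E)` with `(m_0, w_0) ∉ E`, where all
men share the common ranking `w_{n-1} ≻ ⋯ ≻ w_1 ≻ w_0` and all women share
`m_{n-1} ≻ ⋯ ≻ m_1 ≻ m_0` (so `w` is preferred to `w'` iff `w' < w`), the
matching `μ'` pairing `m_i` with `w_i` for `i ≥ 1` and leaving `m_0, w_0`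
unmatched is locally stable w.r.t. `G` but not globally stable.
A pair `(m, w)` is blocking if each prefers the other to their current match
(unmatched agents prefer any partner); local stability means every blocking
pair is invisible through `G`. -/
theorem unmatched_pair_locally_stable_not_stable
    (n : ℕ) (hn : 0 < n) (G : SimpleGraph (Fin n ⊕ Fin n))
    (h0 : ¬ G.Adj (Sum.inl (⟨0, hn⟩ : Fin n)) (Sum.inr (⟨0, hn⟩ : Fin n))) :
    let μ' : Fin n ⊕ Fin n → Fin n ⊕ Fin n := fun x =>
      match x with
      | Sum.inl i => if i.1 = 0 then Sum.inl i else Sum.inr i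
      | Sum.inr i => if i.1 = 0 then Sum.inr i else Sum.inl i
    let Blocking : Fin n → Fin n → Prop := fun m w =>
      (∀ w', μ' (Sum.inl m) = Sum.inr w' → w' < w) ∧
      (∀ m', μ' (Sum.inr w) = Sum.inl m' → m' < m)
    -- locally stable w.r.t. G
    (∀ m w : Fin n, Blocking m w →
        ¬ G.Adj (Sum.inl m) (Sum.inr w) ∧
        ¬ (∃ x, G.Adj (Sum.inl m) x ∧ μ' x = Sum.inr w) ∧
        ¬ (∃ x, G.Adj (Sum.inr w) x ∧ μ' x = Sum.inl m)) ∧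
    -- not globally stable
    (∃ m w : Fin n, Blocking m w) := by
  intro μ'
  have hμ : μ' = diagMatchingExceptZero := by funext x; cases x <;> rfl
  clear_value μ'
  subst hμ
  intro Blocking
  have hinj : Injective (diagMatchingExceptZero (n := n)) :=
    diagMatchingExceptZero.involutive.injective
  refine ⟨fun m w hb => ?_, ⟨0, hn⟩, ⟨0, hn⟩, ?_, ?_⟩
  · obtain ⟨hm, hw⟩ := diagMatchingExceptZero.eq_zero_of_blocking hb.1 hb.2
    obtain rfl : m = ⟨0, hn⟩ := Fin.ext hm
    obtain rfl : w = ⟨0, hn⟩ := Fin.ext hw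
    exact ⟨h0,
      G.not_exists_adj_apply_eq_of_isFixedPt hinj
        (diagMatchingExceptZero.isFixedPt_inr_zero hn) h0,
      G.not_exists_adj_apply_eq_of_isFixedPt hinj
        (diagMatchingExceptZero.isFixedPt_inl_zero hn) (fun h => h0 h.symm)⟩
  all_goals simp [diagMatchingExceptZero]
end

section
/- For the star graph G centered at w_1 on n workers with aligned preferences and k = 1: a bijection μ : W → F is a complete locally stable matching if and only if μ(w_1) = f_1. -/
/-!
If the centre `a` of the star is not matched to the top firm, then `a` prefers the top firm to
its own partner, the top firm prefers `a` (the top worker) to its own partner, and that partner is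
a neighbour of the centre: `(a, a)` blocks along an edge of the star. Conversely, if `μ a = a`,
every edge of the star meets `a`, and a pair containing the top worker or the top firm never
blocks.
-/

namespace Equiv.Perm

variable {α : Type*} [LinearOrder α] {a : α}

theorem starLocallyStable_iff_apply_bot_eq (ha : IsBot a) (μ : Perm α) :
    (∀ w f : α, f < μ w → w < μ.symm f → ¬ (w ≠ μ.symm f ∧ (w = a ∨ μ.symm f = a))) ↔
      μ a = a := by
  constructor
  · intro hstable
    by_contra hμa
    have hμsymm : μ.symm a ≠ a := fun h => hμa (μ.symm_apply_eq.mp h).symm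
    exact hstable a a ((ha _).lt_of_ne' hμa) ((ha _).lt_of_ne' hμsymm)
      ⟨Ne.symm hμsymm, Or.inl rfl⟩
  · rintro hμa w f hf hw ⟨-, rfl | hfa⟩
    · exact (ha f).not_gt (hμa ▸ hf)
    · exact (ha w).not_gt (hfa ▸ hw)

end Equiv.Perm

/-- For the star graph centered at `w_1` (index `0`) on `n` workers with aligned
preferences and `k = 1`: a complete matching (bijection) `μ` is locally stable
iff `μ` assigns worker `w_1` to firm `f_1` (index `0`). Star adjacency:
`w ≠ v ∧ (w = 0 ∨ v = 0)`; `(w, f)` blocks iff `f < μ w` and `w < μ⁻¹ f`. -/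
theorem star_locally_stable_iff_top_worker_at_top_firm
    (n : ℕ) (hn : 0 < n) :
    ∀ μ : Equiv.Perm (Fin n),
      ((∀ w f : Fin n, f < μ w → w < μ.symm f →
          ¬ (w ≠ μ.symm f ∧ (w = ⟨0, hn⟩ ∨ μ.symm f = ⟨0, hn⟩))) ↔
        μ ⟨0, hn⟩ = ⟨0, hn⟩) :=
  Equiv.Perm.starLocallyStable_iff_apply_bot_eq fun x => Nat.zero_le x.val
end
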